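/- Let G be a finite group, M a semi-Mackey functor on G, S₀ ⊆ M(G/G) the preimage of a saturated G-invariant submonoid S ⊆ M(G/e) under pt_{G/e}^*. Then for any transitive finite G-set X and any t ∈ S₀, (pt_X)_*(pt_X^*(t)) ∈ S₀. In particular, pulling back to G/e via the pullback of pt_X along pt_{G/e}, one has pt_{G/e}^*((pt_X)_* pt_X^*(t)) = (pt_{G/e}^*(t))^n where n = |X|. -/

import Mathlib

/-- A finite `G`-set: a finite type equipped with a `G`-action. -/
structure FinGSet (G : Type) [Group G] where
  carrier : Type
  [fin : Fintype carrier]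
  [act : MulAction G carrier]

attribute [instance] FinGSet.fin FinGSet.act

/-- A map of `G`-sets is equivariant if it commutes with the action. -/
def IsEquivariant {G : Type} [Group G] {X Y : FinGSet G}
    (f : X.carrier → Y.carrier) : Prop :=
  ∀ (g : G) (x : X.carrier), f (g • x) = g • f x

/-- The disjoint union of two finite `G`-sets. -/
def FinGSet.sum {G : Type} [Group G] (X Y : FinGSet G) : FinGSet G where
  carrier := X.carrier ⊕ Y.carrier

/-- A semi-Mackey functor on `G` with underlying family of commutative monoids `N`:
a contravariant functor `res` (restriction) and a covariant functor `tr`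
(transfer) on finite `G`-sets, additive on disjoint unions and satisfying the
Mackey (base change) condition on all pullback diagrams. -/
structure SemiMackey (G : Type) [Group G] (N : FinGSet G → Type)
    [∀ X, CommMonoid (N X)] where
  res : ∀ {X Y : FinGSet G} (f : X.carrier → Y.carrier), IsEquivariant f → (N Y →* N X)
  tr : ∀ {X Y : FinGSet G} (f : X.carrier → Y.carrier), IsEquivariant f → (N X →* N Y)
  res_id : ∀ (X : FinGSet G) (h : IsEquivariant (id : X.carrier → X.carrier)) (m : N X),
    res id h m = m
  tr_id : ∀ (X : FinGSet G) (h : IsEquivariant (id : X.carrier → X.carrier)) (m : N X),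
    tr id h m = m
  res_comp : ∀ {X Y Z : FinGSet G} (f : X.carrier → Y.carrier) (hf : IsEquivariant f)
    (g : Y.carrier → Z.carrier) (hg : IsEquivariant g)
    (hgf : IsEquivariant (g ∘ f)) (m : N Z),
    res (g ∘ f) hgf m = res f hf (res g hg m)
  tr_comp : ∀ {X Y Z : FinGSet G} (f : X.carrier → Y.carrier) (hf : IsEquivariant f)
    (g : Y.carrier → Z.carrier) (hg : IsEquivariant g)
    (hgf : IsEquivariant (g ∘ f)) (m : N X),
    tr (g ∘ f) hgf m = tr g hg (tr f hf m)
  additive : ∀ (X Y : FinGSet G)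
    (h₁ : IsEquivariant (X := X) (Y := FinGSet.sum X Y) Sum.inl)
    (h₂ : IsEquivariant (X := Y) (Y := FinGSet.sum X Y) Sum.inr),
    Function.Bijective (fun m : N (FinGSet.sum X Y) => (res Sum.inl h₁ m, res Sum.inr h₂ m))
  mackey : ∀ {P X W Y : FinGSet G}
    (f : X.carrier → Y.carrier) (hf : IsEquivariant f)
    (g : W.carrier → Y.carrier) (hg : IsEquivariant g)
    (pX : P.carrier → X.carrier) (hpX : IsEquivariant pX)
    (pW : P.carrier → W.carrier) (hpW : IsEquivariant pW)
    (hcomm : ∀ p, f (pX p) = g (pW p)),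
    Function.Bijective
      (fun p : P.carrier =>
        (⟨(pX p, pW p), hcomm p⟩ : {q : X.carrier × W.carrier // f q.1 = g q.2})) →
    ∀ m : N W, res f hf (tr g hg m) = tr pX hpX (res pW hpW m)

/-- The saturation of a subset of a commutative monoid. -/
def satSet {M : Type*} [CommMonoid M] (S : Set M) : Set M :=
  {x | ∃ a : M, ∃ s ∈ S, a * x = s}

/-- The one-point `G`-set `G/G`. -/
def ptObj (G : Type) [Group G] : FinGSet G where
  carrier := PUnit
  act :=
    { smul := fun _ _ => PUnit.unit
      one_smul := fun _ => rfl
      mul_smul := fun _ _ _ => rfl }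

/-- The constant map `pt_X : X → G/G`. -/
def ptMap {G : Type} [Group G] (X : FinGSet G) : X.carrier → (ptObj G).carrier :=
  fun _ => PUnit.unit

theorem ptMap_equivariant {G : Type} [Group G] (X : FinGSet G) :
    IsEquivariant (ptMap X) := fun _ _ => rfl

/-- The free orbit `G/e`, i.e. `G` with the left translation action. -/
abbrev GeObj (G : Type) [Group G] [Fintype G] : FinGSet G where
  carrier := G

theorem rmul_equivariant {G : Type} [Group G] [Fintype G] (g : G) :
    IsEquivariant (X := GeObj G) (Y := GeObj G) (fun x => x * g) :=
  fun a x => by simp [GeObj, smul_eq_mul, mul_assoc]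

/-! Base change along `pt_{G/e}` turns `pt_{G/e}^* (pt_X)_* pt_X^* t` into the transfer, along
`G/e × X → G/e`, of the restriction of `pt_{G/e}^* t`. As `G/e` is free, `(g, x) ↦ (g, g⁻¹ • x)`
untwists the diagonal action, so `G/e × X` is `|X|` disjoint copies of `G/e` over `G/e`, and
additivity of the Mackey functor turns that transfer into the `|X|`-th power. -/

namespace IsEquivariant

variable {G : Type} [Group G] {X Y Z : FinGSet G}

theorem id : IsEquivariant (id : X.carrier → X.carrier) := fun _ _ => rfl

theorem comp {g : Y.carrier → Z.carrier} {f : X.carrier → Y.carrier}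
    (hg : IsEquivariant g) (hf : IsEquivariant f) : IsEquivariant (g ∘ f) := fun a x => by
  simp only [Function.comp_apply, hf a x, hg a (f x)]

theorem symm_ofBijective {f : X.carrier → Y.carrier} (hf : IsEquivariant f)
    (hbij : Function.Bijective f) : IsEquivariant (Equiv.ofBijective f hbij).symm :=
  fun a y => (Equiv.ofBijective f hbij).symm_apply_eq.mpr <| by
    simp [hf a, Equiv.ofBijective_apply_symm_apply]

end IsEquivariant

namespace FinGSet

variable {G : Type} [Group G]

abbrev empty (G : Type) [Group G] : FinGSet G where
  carrier := PEmpty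
  act :=
    { smul := fun _ x => x
      one_smul := fun _ => rfl
      mul_smul := fun _ _ _ => rfl }

abbrev trivial (G : Type) [Group G] (F : Type) [Fintype F] : FinGSet G where
  carrier := F
  act :=
    { smul := fun _ x => x
      one_smul := fun _ => rfl
      mul_smul := fun _ _ _ => rfl }

abbrev prod (X Y : FinGSet G) : FinGSet G where
  carrier := X.carrier × Y.carrier

variable (X Y : FinGSet G)

theorem inl_equivariant : IsEquivariant (X := X) (Y := X.sum Y) Sum.inl := fun _ _ => rfl

theorem inr_equivariant : IsEquivariant (X := Y) (Y := X.sum Y) Sum.inr := fun _ _ => rfl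

theorem fst_equivariant : IsEquivariant (X := X.prod Y) (Y := X) Prod.fst := fun _ _ => rfl

theorem snd_equivariant : IsEquivariant (X := X.prod Y) (Y := Y) Prod.snd := fun _ _ => rfl

end FinGSet

namespace SemiMackey

open FinGSet

variable {G : Type} [Group G] {N : FinGSet G → Type} [∀ X, CommMonoid (N X)]
  (M : SemiMackey G N)

theorem res_congr {X Y : FinGSet G} {f f' : X.carrier → Y.carrier} (hf : IsEquivariant f)
    (hf' : IsEquivariant f') (h : f = f') (m : N Y) : M.res f hf m = M.res f' hf' m := by
  subst h; rfl

theorem tr_congr {X Y : FinGSet G} {f f' : X.carrier → Y.carrier} (hf : IsEquivariant f)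
    (hf' : IsEquivariant f') (h : f = f') (m : N X) : M.tr f hf m = M.tr f' hf' m := by
  subst h; rfl

theorem res_res_ptMap {X Y : FinGSet G} (f : X.carrier → Y.carrier) (hf : IsEquivariant f)
    (t : N (ptObj G)) :
    M.res f hf (M.res (ptMap Y) (ptMap_equivariant Y) t)
      = M.res (ptMap X) (ptMap_equivariant X) t :=
  (M.res_comp f hf (ptMap Y) (ptMap_equivariant Y) (ptMap_equivariant X) t).symm

-- For empty `E`, `Sum.inl = Sum.inr : E → E ⊕ E`, so additivity makes the diagonal of `N E`
-- bijective.
theorem eq_of_isEmpty (M : SemiMackey G N) (E : FinGSet G) [IsEmpty E.carrier] (m m' : N E) :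
    m = m' := by
  have hinl := inl_equivariant E E
  have hinr := inr_equivariant E E
  obtain ⟨w, hw⟩ := (M.additive E E hinl hinr).surjective (m, m')
  simp only [Prod.mk.injEq] at hw
  rw [← hw.1, ← hw.2]
  exact M.res_congr hinl hinr (funext isEmptyElim) w

theorem res_tr_of_injective {X Y : FinGSet G} (f : X.carrier → Y.carrier)
    (hf : IsEquivariant f) (hinj : Function.Injective f) (m : N X) :
    M.res f hf (M.tr f hf m) = m := by
  have hdiag : Function.Bijective fun x : X.carrier =>
      (⟨(id x, id x), rfl⟩ : {q : X.carrier × X.carrier // f q.1 = f q.2}) :=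
    ⟨fun _ _ h => congrArg (fun q => q.val.1) h,
      fun ⟨⟨a, b⟩, hab⟩ => ⟨a, Subtype.ext (Prod.ext rfl (hinj hab))⟩⟩
  rw [M.mackey f hf f hf id .id id .id (fun _ => rfl) hdiag, M.res_id, M.tr_id]

theorem res_tr_eq_one_of_disjoint {X W Y : FinGSet G} (f : X.carrier → Y.carrier)
    (hf : IsEquivariant f) (g : W.carrier → Y.carrier) (hg : IsEquivariant g)
    (hdisj : ∀ x w, f x ≠ g w) (m : N W) : M.res f hf (M.tr g hg m) = 1 := by
  have : IsEmpty (empty G).carrier := inferInstanceAs (IsEmpty PEmpty)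
  have hpull : Function.Bijective fun p : (empty G).carrier =>
      (⟨(isEmptyElim p, isEmptyElim p), isEmptyElim p⟩ :
        {q : X.carrier × W.carrier // f q.1 = g q.2}) :=
    ⟨fun p => isEmptyElim p, fun q => absurd q.2 (hdisj _ _)⟩
  rw [M.mackey f hf g hg _ (fun _ p => isEmptyElim p) _ (fun _ p => isEmptyElim p) _ hpull]
  exact (congrArg _ (M.eq_of_isEmpty (empty G) _ 1)).trans (map_one _)

theorem eq_tr_inl_mul_tr_inr {X Y : FinGSet G} (w : N (X.sum Y)) :
    w = M.tr Sum.inl (inl_equivariant X Y) (M.res Sum.inl (inl_equivariant X Y) w)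
      * M.tr Sum.inr (inr_equivariant X Y) (M.res Sum.inr (inr_equivariant X Y) w) := by
  have hdisj : ∀ x y, (Sum.inl x : X.carrier ⊕ Y.carrier) ≠ .inr y := fun _ _ => Sum.inl_ne_inr
  refine (M.additive X Y (inl_equivariant X Y) (inr_equivariant X Y)).injective
    (Prod.ext ?_ ?_) <;> dsimp only
  · rw [map_mul, M.res_tr_of_injective _ (inl_equivariant X Y) Sum.inl_injective,
      M.res_tr_eq_one_of_disjoint _ (inl_equivariant X Y) _ (inr_equivariant X Y) hdisj, mul_one]
  · rw [map_mul, M.res_tr_of_injective _ (inr_equivariant X Y) Sum.inr_injective,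
      M.res_tr_eq_one_of_disjoint _ (inr_equivariant X Y) _ (inl_equivariant X Y)
        (fun y x => (hdisj x y).symm), one_mul]

theorem tr_sumElim {X Y Z : FinGSet G} (f : X.carrier → Z.carrier) (hf : IsEquivariant f)
    (g : Y.carrier → Z.carrier) (hg : IsEquivariant g)
    (hfg : IsEquivariant (X := X.sum Y) (Y := Z) (Sum.elim f g)) (w : N (X.sum Y)) :
    M.tr (Sum.elim f g) hfg w
      = M.tr f hf (M.res Sum.inl (inl_equivariant X Y) w)
        * M.tr g hg (M.res Sum.inr (inr_equivariant X Y) w) := by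
  conv_lhs => rw [M.eq_tr_inl_mul_tr_inr w]
  rw [map_mul, ← M.tr_comp (Y := X.sum Y) Sum.inl (inl_equivariant X Y) _ hfg hf,
    ← M.tr_comp (Y := X.sum Y) Sum.inr (inr_equivariant X Y) _ hfg hg]
  rfl

theorem tr_res_of_bijective {X Y : FinGSet G} (f : X.carrier → Y.carrier)
    (hf : IsEquivariant f) (hbij : Function.Bijective f) (m : N Y) :
    M.tr f hf (M.res f hf m) = m := by
  let e := Equiv.ofBijective f hbij
  have he : IsEquivariant e.symm := hf.symm_ofBijective hbij
  have htr : M.tr f hf (M.tr e.symm he m) = m := by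
    rw [← M.tr_comp _ _ _ hf (hf.comp he),
      M.tr_congr (f := f ∘ e.symm) _ .id (funext (Equiv.ofBijective_apply_symm_apply f hbij)),
      M.tr_id]
  rw [← htr, M.res_tr_of_injective f hf hbij.injective]

theorem tr_res_sumElim {X Y Z : FinGSet G} (f : X.carrier → Z.carrier) (hf : IsEquivariant f)
    (g : Y.carrier → Z.carrier) (hg : IsEquivariant g)
    (hfg : IsEquivariant (X := X.sum Y) (Y := Z) (Sum.elim f g)) (m : N Z) :
    M.tr (Sum.elim f g) hfg (M.res (X := X.sum Y) (Sum.elim f g) hfg m)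
      = M.tr f hf (M.res f hf m) * M.tr g hg (M.res g hg m) := by
  rw [M.tr_sumElim f hf g hg, ← M.res_comp (Y := X.sum Y) Sum.inl _ _ hfg hf,
    ← M.res_comp (Y := X.sum Y) Sum.inr _ _ hfg hg]
  rfl

theorem tr_res_eq_of_bijective {P X Y : FinGSet G} (q : X.carrier → Y.carrier)
    (hq : IsEquivariant q) (f : P.carrier → X.carrier) (hf : IsEquivariant f)
    (hbij : Function.Bijective f) (q' : P.carrier → Y.carrier) (hq' : IsEquivariant q')
    (hcomm : q ∘ f = q') (m : N Y) :
    M.tr q' hq' (M.res q' hq' m) = M.tr q hq (M.res q hq m) := by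
  subst hcomm
  rw [M.res_comp f hf q hq, M.tr_comp f hf q hq, M.tr_res_of_bijective f hf hbij]

theorem tr_res_fst_prod_trivial (Y : FinGSet G) (F : Type) [Fintype F] (m : N Y) :
    M.tr Prod.fst (fst_equivariant Y (trivial G F))
        (M.res (X := Y.prod (trivial G F)) Prod.fst (fst_equivariant Y _) m)
      = m ^ Fintype.card F := by
  refine Fintype.induction_empty_option (P := fun F _ =>
    M.tr Prod.fst (fst_equivariant Y (trivial G F))
        (M.res (X := Y.prod (trivial G F)) Prod.fst (fst_equivariant Y _) m)
      = m ^ Fintype.card F) ?_ ?_ ?_ F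
  · intro α β _ e ih
    let _ : Fintype α := Fintype.ofEquiv β e.symm
    have hf : IsEquivariant (X := Y.prod (FinGSet.trivial G α))
        (Y := Y.prod (FinGSet.trivial G β)) (Prod.map id e) := fun _ _ => rfl
    rw [← M.tr_res_eq_of_bijective _ (fst_equivariant Y _) _ hf
      (Function.bijective_id.prodMap e.bijective) _ (fst_equivariant Y _) rfl]
    exact ih.trans (congrArg _ (Fintype.card_congr e))
  · have : IsEmpty (Y.prod (trivial G PEmpty)).carrier := inferInstanceAs (IsEmpty (_ × PEmpty))
    rw [M.eq_of_isEmpty _ (M.res _ _ m) 1, map_one, Fintype.card_pempty, pow_zero]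
  · intro α _ ih
    have hf : IsEquivariant (X := (Y.prod (trivial G α)).sum Y)
        (Y := Y.prod (trivial G (Option α)))
        (Sum.elim (Prod.map id some) (fun y => (y, none))) := by
      rintro a (_ | _) <;> rfl
    have hbij : Function.Bijective (Sum.elim (Prod.map id some) (fun y => (y, none)) :
        (Y.carrier × α) ⊕ Y.carrier → Y.carrier × Option α) := by
      refine Function.bijective_iff_has_inverse.mpr
        ⟨fun p => p.2.elim (.inr p.1) (fun a => .inl (p.1, a)), ?_, ?_⟩
      · rintro (⟨y, a⟩ | y) <;> rfl
      · rintro ⟨y, _ | a⟩ <;> rfl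
    rw [← M.tr_res_eq_of_bijective _ (fst_equivariant Y _) _ hf hbij (Sum.elim Prod.fst id)
      (by rintro a (_ | _) <;> rfl) (funext (by rintro (_ | _) <;> rfl))]
    refine (M.tr_res_sumElim _ (fst_equivariant Y _) id .id _ m).trans ?_
    rw [ih, M.res_id, M.tr_id, Fintype.card_option, pow_succ]

theorem res_ptMap_tr_ptMap (X Y : FinGSet G) (m : N X) :
    M.res (ptMap Y) (ptMap_equivariant Y) (M.tr (ptMap X) (ptMap_equivariant X) m)
      = M.tr Prod.fst (fst_equivariant Y X)
          (M.res (X := Y.prod X) Prod.snd (snd_equivariant Y X) m) :=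
  M.mackey _ _ _ _ _ (fst_equivariant Y X) _ (snd_equivariant Y X) (fun _ => rfl)
    ⟨fun _ _ h => congrArg Subtype.val h, fun q => ⟨q.1, rfl⟩⟩ m

variable [Fintype G]

theorem tr_res_fst_geObj_prod (X : FinGSet G) (m : N (GeObj G)) :
    M.tr Prod.fst (fst_equivariant (GeObj G) X)
        (M.res (X := (GeObj G).prod X) Prod.fst (fst_equivariant _ X) m)
      = m ^ Fintype.card X.carrier := by
  have hf : IsEquivariant (X := (GeObj G).prod X) (Y := (GeObj G).prod (trivial G X.carrier))
      (fun p => (p.1, p.1⁻¹ • p.2)) := fun a p => by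
    refine Prod.ext rfl ?_
    show (a * p.1)⁻¹ • a • p.2 = p.1⁻¹ • p.2
    rw [mul_inv_rev, mul_smul, inv_smul_smul]
  have hbij : Function.Bijective (fun p => (p.1, p.1⁻¹ • p.2) : G × X.carrier → G × X.carrier) :=
    Function.bijective_iff_has_inverse.mpr ⟨fun p => (p.1, p.1 • p.2),
      fun p => Prod.ext rfl (smul_inv_smul p.1 p.2), fun p => Prod.ext rfl (inv_smul_smul p.1 p.2)⟩
  exact (M.tr_res_eq_of_bijective _ (fst_equivariant _ (FinGSet.trivial G X.carrier)) _ hf hbij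
    _ (fst_equivariant _ X) rfl m).trans (M.tr_res_fst_prod_trivial _ _ m)

theorem res_ptMap_tr_res_ptMap (X : FinGSet G) (t : N (ptObj G)) :
    M.res (ptMap (GeObj G)) (ptMap_equivariant (GeObj G))
        (M.tr (ptMap X) (ptMap_equivariant X) (M.res (ptMap X) (ptMap_equivariant X) t))
      = M.res (ptMap (GeObj G)) (ptMap_equivariant (GeObj G)) t
          ^ Fintype.card X.carrier := by
  rw [res_ptMap_tr_ptMap, res_res_ptMap, ← M.res_res_ptMap Prod.fst (fst_equivariant _ X),
    tr_res_fst_geObj_prod]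

end SemiMackey

theorem tr_res_ptMap_mem_general {G : Type} [Group G] [Fintype G] {N : FinGSet G → Type}
    [∀ X, CommMonoid (N X)] (M : SemiMackey G N)
    (S : Submonoid (N (GeObj G)))
    (X : FinGSet G)
    (t : N (ptObj G))
    (ht : M.res (ptMap (GeObj G)) (ptMap_equivariant (GeObj G)) t ∈ S) :
    M.res (ptMap (GeObj G)) (ptMap_equivariant (GeObj G))
        (M.tr (ptMap X) (ptMap_equivariant X)
          (M.res (ptMap X) (ptMap_equivariant X) t)) ∈ S ∧
    M.res (ptMap (GeObj G)) (ptMap_equivariant (GeObj G))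
        (M.tr (ptMap X) (ptMap_equivariant X)
          (M.res (ptMap X) (ptMap_equivariant X) t))
      = (M.res (ptMap (GeObj G)) (ptMap_equivariant (GeObj G)) t)
          ^ (Fintype.card X.carrier) :=
  ⟨M.res_ptMap_tr_res_ptMap X t ▸ pow_mem ht _, M.res_ptMap_tr_res_ptMap X t⟩

/-- For a saturated `G`-invariant submonoid `S ⊆ M(G/e)` with
`S₀ = (pt_{G/e}^*)⁻¹(S)`, for every transitive finite `G`-set `X` and every
`t ∈ S₀` one has `(pt_X)_*(pt_X^*(t)) ∈ S₀`; in fact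
`pt_{G/e}^*((pt_X)_* pt_X^*(t)) = (pt_{G/e}^*(t))^n` where `n = |X|`. -/
theorem tr_res_ptMap_mem {G : Type} [Group G] [Fintype G] {N : FinGSet G → Type}
    [∀ X, CommMonoid (N X)] (M : SemiMackey G N)
    (S : Submonoid (N (GeObj G)))
    (hsat : satSet (S : Set (N (GeObj G))) = (S : Set (N (GeObj G))))
    (hinv : ∀ g : G, ∀ s ∈ S, M.res (fun x => x * g) (rmul_equivariant g) s ∈ S)
    (X : FinGSet G) (hX : MulAction.IsPretransitive G X.carrier)
    (t : N (ptObj G))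
    (ht : M.res (ptMap (GeObj G)) (ptMap_equivariant (GeObj G)) t ∈ S) :
    M.res (ptMap (GeObj G)) (ptMap_equivariant (GeObj G))
        (M.tr (ptMap X) (ptMap_equivariant X)
          (M.res (ptMap X) (ptMap_equivariant X) t)) ∈ S ∧
    M.res (ptMap (GeObj G)) (ptMap_equivariant (GeObj G))
        (M.tr (ptMap X) (ptMap_equivariant X)
          (M.res (ptMap X) (ptMap_equivariant X) t))
      = (M.res (ptMap (GeObj G)) (ptMap_equivariant (GeObj G)) t)
          ^ (Fintype.card X.carrier) :=
  tr_res_ptMap_mem_general M S X t ht
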